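/- Let R : [ω_*, ω^*] → SO(3) be continuously differentiable, let F(t,ω) := R(ω) exp(σ(t) ω S), and suppose N : [0, ∞) × [ω_*, ω^*] → ℝ³ is continuously differentiable, has continuous mixed second partial derivative ∂²N/∂t∂ω, and satisfies the closed-loop equation ∂N/∂t(t,ω) = Σ_{i=1}^{2} u_i(t) [F(t,ω) e_i] ∧ N(t,ω) with the feedback u_i(t) := −H_i[t, N(t,·)] for i = 1,2. Then d/dt L(N(t,·)) = −u₁(t)² − u₂(t)² ≤ 0 wherever σ is differentiable; in particular t ↦ L(N(t,·)) is nonincreasing on [0, ∞). -/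

import Mathlib

noncomputable section

open scoped RealInnerProductSpace
open Matrix Set Filter

attribute [local instance] Matrix.normedAddCommGroup Matrix.normedSpace

/-- ℝ³ with the Euclidean norm. -/
abbrev E3 : Type := EuclideanSpace ℝ (Fin 3)

/-- First canonical basis vector of ℝ³. -/
def e1 : E3 := EuclideanSpace.single 0 1
/-- Second canonical basis vector of ℝ³. -/
def e2 : E3 := EuclideanSpace.single 1 1
/-- Third canonical basis vector of ℝ³. -/
def e3 : E3 := EuclideanSpace.single 2 1

/-- Cross (wedge) product on ℝ³. -/
def cross (x y : E3) : E3 :=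
  (WithLp.equiv 2 (Fin 3 → ℝ)).symm
    (crossProduct ((WithLp.equiv 2 (Fin 3 → ℝ)) x) ((WithLp.equiv 2 (Fin 3 → ℝ)) y))

/-- Action of a 3×3 real matrix on ℝ³. -/
def act (A : Matrix (Fin 3) (Fin 3) ℝ) (x : E3) : E3 := Matrix.toEuclideanLin A x

/-- Operator norm of a 3×3 real matrix w.r.t. the Euclidean norm. -/
def opNorm (A : Matrix (Fin 3) (Fin 3) ℝ) : ℝ :=
  ‖(LinearMap.toContinuousLinearMap (Matrix.toEuclideanLin A))‖

/-- `A ∈ SO(3)`. -/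
def IsSO (A : Matrix (Fin 3) (Fin 3) ℝ) : Prop := Aᵀ * A = 1 ∧ A.det = 1

/-- The matrix S with rows (0,1,0), (−1,0,0), (0,0,0). -/
def Smat : Matrix (Fin 3) (Fin 3) ℝ := !![0,1,0; -1,0,0; 0,0,0]

/-- Matrix exponential. -/
def expm (A : Matrix (Fin 3) (Fin 3) ℝ) : Matrix (Fin 3) (Fin 3) ℝ := NormedSpace.exp A

/-- The switching function σ(t) = ∫₀ᵗ (−1)^⌊s/T⌋ ds. -/
def sigma (T t : ℝ) : ℝ := ∫ s in (0:ℝ)..t, ((-1 : ℝ) ^ (⌊s / T⌋))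

/-- F(t,ω) = R(ω) exp(σ(t) ω S). -/
def Fmat (R : ℝ → Matrix (Fin 3) (Fin 3) ℝ) (T t ω : ℝ) : Matrix (Fin 3) (Fin 3) ℝ :=
  R ω * expm ((sigma T t * ω) • Smat)

/-- ∂F/∂ω(t,ω) = R′(ω) exp(σ(t) ω S) + σ(t) R(ω) S exp(σ(t) ω S). -/
def Fmatω (R R' : ℝ → Matrix (Fin 3) (Fin 3) ℝ) (T t ω : ℝ) : Matrix (Fin 3) (Fin 3) ℝ :=
  R' ω * expm ((sigma T t * ω) • Smat) + sigma T t • (R ω * (Smat * expm ((sigma T t * ω) • Smat)))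

/-- The functional H[t,N] (for basis direction `v`), where `N'` denotes dN/dω:
`H_v[t,N] = ∫ (⟨N′, (∂F/∂ω v) ∧ N⟩ + ⟨e₃, (F v) ∧ N⟩) dω`. -/
def Hfun (a b : ℝ) (R R' : ℝ → Matrix (Fin 3) (Fin 3) ℝ) (T t : ℝ)
    (N N' : ℝ → E3) (v : E3) : ℝ :=
  ∫ ω in a..b, (⟪N' ω, cross (act (Fmatω R R' T t ω) v) (N ω)⟫
    + ⟪e3, cross (act (Fmat R T t ω) v) (N ω)⟫)

/-- The Lyapunov functional L(N) = ∫ (½‖N′‖² + 1 + ⟨N, e₃⟩) dω. -/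
def Lfun (a b : ℝ) (N N' : ℝ → E3) : ℝ :=
  ∫ ω in a..b, ((1/2) * ‖N' ω‖^2 + 1 + ⟪N ω, e3⟫)

/-!
Along the closed-loop flow `∂ₜN = Σᵢ uᵢ (F eᵢ) ∧ N`, equality of mixed partials gives
`∂ₜ∂_ωN = Σᵢ uᵢ ((∂_ωF eᵢ) ∧ N + (F eᵢ) ∧ ∂_ωN)`. Differentiating `L` under the integral sign,
the terms `⟨∂_ωN, (F eᵢ) ∧ ∂_ωN⟩` vanish and what is left is exactly `Σᵢ uᵢ Hᵢ[t, N] = -u₁² - u₂²`.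
Both analytic facts are reduced to the fundamental theorem of calculus and Fubini's theorem on
compact rectangles, which also handles the one-sided derivatives at `t = 0`.
-/

open MeasureTheory Function
open scoped Topology

local notation "Mat" => Matrix (Fin 3) (Fin 3) ℝ

section IntervalCalculus

variable {E : Type*} [NormedAddCommGroup E] [NormedSpace ℝ E]

theorem ContinuousOn.intervalIntegral_prod {X : Type*} [TopologicalSpace X] {f : X → ℝ → E}
    {s : Set X} {a b : ℝ} (hab : a ≤ b) (hf : ContinuousOn (uncurry f) (s ×ˢ Icc a b)) :
    ContinuousOn (fun x => ∫ y in a..b, f x y) s := by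
  rw [continuousOn_iff_continuous_domRestrict]
  -- clamping the second variable into `[a, b]` makes the integrand continuous everywhere
  have hclamp : Continuous fun p : s × ℝ => f p.1 (projIcc a b hab p.2) :=
    hf.comp_continuous (f := fun p : s × ℝ => ((p.1 : X), (projIcc a b hab p.2 : ℝ)))
      (by fun_prop) fun p => ⟨p.1.2, (projIcc a b hab p.2).2⟩
  refine (intervalIntegral.continuous_parametric_intervalIntegral_of_continuous'
    (f := fun (x : s) y => f x (projIcc a b hab y)) (μ := volume) hclamp a b).congr fun x => ?_
  refine intervalIntegral.integral_congr fun y hy => ?_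
  rw [uIcc_of_le hab] at hy
  simp [projIcc_of_mem hab hy]

variable [CompleteSpace E]

theorem hasDerivWithinAt_integral_Icc {f : ℝ → E} {a b x : ℝ} (hf : ContinuousOn f (Icc a b))
    (hx : x ∈ Icc a b) : HasDerivWithinAt (fun u => ∫ y in a..u, f y) (f x) (Icc a b) x := by
  have : Fact (x ∈ Icc a b) := ⟨hx⟩ -- for the `FTCFilter` instance on `𝓝[Icc a b] x`
  exact intervalIntegral.integral_hasDerivWithinAt_right
    ((hf.mono (uIcc_subset_Icc (left_mem_Icc.2 (hx.1.trans hx.2)) hx)).intervalIntegrable)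
    (hf.stronglyMeasurableAtFilter_nhdsWithin measurableSet_Icc x) (hf x hx)

theorem hasDerivWithinAt_integral_Ici {f : ℝ → E} {a x : ℝ} (hf : ContinuousOn f (Ici a))
    (hx : x ∈ Ici a) : HasDerivWithinAt (fun u => ∫ y in a..u, f y) (f x) (Ici a) x := by
  have hIcc : Icc a (x + 1) ∈ 𝓝[Ici a] x := by
    rw [← Ici_inter_Iic]
    exact inter_mem_nhdsWithin _ (Iic_mem_nhds (lt_add_one x))
  exact (hasDerivWithinAt_integral_Icc (hf.mono Icc_subset_Ici_self)
    ⟨hx, (lt_add_one x).le⟩).mono_of_mem_nhdsWithin hIcc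

theorem integral_eq_sub_of_hasDerivWithinAt_of_Icc_subset {φ φ' : ℝ → E} {s : Set ℝ} {a b : ℝ}
    (hab : a ≤ b) (hs : Icc a b ⊆ s) (hφ : ∀ x ∈ Icc a b, HasDerivWithinAt φ (φ' x) s x)
    (hφ' : ContinuousOn φ' (Icc a b)) : ∫ x in a..b, φ' x = φ b - φ a :=
  intervalIntegral.integral_eq_sub_of_hasDeriv_right_of_le hab
    (fun x hx => (hφ x hx).continuousWithinAt.mono hs)
    (fun x hx => ((hφ x (Ioo_subset_Icc_self hx)).hasDerivAt
      (mem_of_superset (Icc_mem_nhds hx.1 hx.2) hs)).hasDerivWithinAt)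
    (hφ'.intervalIntegrable_of_Icc hab)

theorem hasDerivWithinAt_intervalIntegral_of_continuousOn_deriv {f f' : ℝ → ℝ → E} {t₀ a b t : ℝ}
    (hab : a ≤ b) (hf : ∀ s ∈ Ici t₀, IntervalIntegrable (f s) volume a b)
    (hf_deriv : ∀ s ∈ Ici t₀, ∀ x ∈ Icc a b, HasDerivWithinAt (f · x) (f' s x) (Ici t₀) s)
    (hf' : ContinuousOn (uncurry f') (Ici t₀ ×ˢ Icc a b)) (ht : t ∈ Ici t₀) :
    HasDerivWithinAt (fun s => ∫ x in a..b, f s x) (∫ x in a..b, f' t x) (Ici t₀) t := by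
  have hprimitive : ∀ s ∈ Ici t₀,
      ∫ x in a..b, f s x = (∫ x in a..b, f t₀ x) + ∫ r in t₀..s, ∫ x in a..b, f' r x := by
    intro s hs
    have hFTC : ∀ x ∈ uIcc a b, f s x - f t₀ x = ∫ r in t₀..s, f' r x := by
      intro x hx
      rw [uIcc_of_le hab] at hx
      exact (integral_eq_sub_of_hasDerivWithinAt_of_Icc_subset hs Icc_subset_Ici_self
        (fun r hr => hf_deriv r hr.1 x hx) (hf'.uncurry_right x hx |>.mono
          Icc_subset_Ici_self)).symm
    have hint : IntegrableOn (uncurry f') (uIoc t₀ s ×ˢ uIoc a b) := by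
      rw [uIoc_of_le hs, uIoc_of_le hab]
      exact ((hf'.mono (prod_mono Icc_subset_Ici_self subset_rfl)).integrableOn_compact
        (isCompact_Icc.prod isCompact_Icc)).mono_set (prod_mono Ioc_subset_Icc_self
          Ioc_subset_Icc_self)
    rw [intervalIntegral_intervalIntegral_swap hint, ← intervalIntegral.integral_congr hFTC,
      intervalIntegral.integral_sub (hf s hs) (hf t₀ self_mem_Ici), add_sub_cancel]
  exact ((hasDerivWithinAt_integral_Ici (hf'.intervalIntegral_prod hab) ht).const_add
    (∫ x in a..b, f t₀ x)).congr hprimitive (hprimitive t ht)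

theorem hasDerivWithinAt_of_mixed_partials {N Nt Nω Ntω : ℝ → ℝ → E} {t₀ a b t x : ℝ}
    (hab : a ≤ b)
    (hNt : ∀ s ∈ Ici t₀, ∀ y ∈ Icc a b, HasDerivWithinAt (N · y) (Nt s y) (Ici t₀) s)
    (hNω : ∀ s ∈ Ici t₀, ∀ y ∈ Icc a b, HasDerivWithinAt (N s) (Nω s y) (Icc a b) y)
    (hNω_cont : ContinuousOn (uncurry Nω) (Ici t₀ ×ˢ Icc a b))
    (hNωt : ∀ s ∈ Ici t₀, ∀ y ∈ Icc a b, HasDerivWithinAt (Nω · y) (Ntω s y) (Ici t₀) s)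
    (hNtω_cont : ContinuousOn (uncurry Ntω) (Ici t₀ ×ˢ Icc a b))
    (ht : t ∈ Ici t₀) (hx : x ∈ Icc a b) :
    HasDerivWithinAt (Nt t) (Ntω t x) (Icc a b) x := by
  have ha : a ∈ Icc a b := left_mem_Icc.2 hab
  have hdiff : ∀ y ∈ Icc a b, Nt t y = Nt t a + ∫ z in a..y, Ntω t z := by
    intro y hy
    have hsub : Icc a y ⊆ Icc a b := Icc_subset_Icc_right hy.2
    have hprim : ∀ s ∈ Ici t₀, N s y - N s a = ∫ z in a..y, Nω s z := fun s hs =>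
      (integral_eq_sub_of_hasDerivWithinAt_of_Icc_subset hy.1 hsub
        (fun z hz => hNω s hs z (hsub hz)) ((hNω_cont.uncurry_left s hs).mono hsub)).symm
    have hleibniz := hasDerivWithinAt_intervalIntegral_of_continuousOn_deriv hy.1
      (fun s hs => ((hNω_cont.uncurry_left s hs).mono hsub).intervalIntegrable_of_Icc hy.1)
      (fun s hs z hz => hNωt s hs z (hsub hz))
      (hNtω_cont.mono (prod_mono subset_rfl hsub)) ht
    exact eq_add_of_sub_eq' <| (uniqueDiffOn_Ici t₀ t ht).eq_deriv _
      ((hNt t ht y hy).sub (hNt t ht a ha)) (hleibniz.congr hprim (hprim t ht))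
  exact ((hasDerivWithinAt_integral_Icc (hNtω_cont.uncurry_left t ht) hx).const_add
    (Nt t a)).congr hdiff (hdiff x hx)

end IntervalCalculus

section OperatorNorm

/- The operator norm makes matrices a normed algebra; the lemmas proved with it also hold for the
entrywise norm of the statement, since derivatives only depend on the (common) topology. -/
attribute [-instance] Matrix.normedAddCommGroup Matrix.normedSpace
attribute [local instance] Matrix.linftyOpNormedRing Matrix.linftyOpNormedAlgebra

theorem hasDerivAt_expm_smul (A : Mat) (x : ℝ) :
    HasDerivAt (fun u : ℝ => expm (u • A)) (expm (x • A) * A) x :=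
  hasDerivAt_exp_smul_const A x

theorem HasDerivWithinAt.matrix_mul {f g : ℝ → Mat} {f' g' : Mat} {s : Set ℝ} {x : ℝ}
    (hf : HasDerivWithinAt f f' s x) (hg : HasDerivWithinAt g g' s x) :
    HasDerivWithinAt (fun t => f t * g t) (f' * g x + f x * g') s x :=
  hf.mul hg

end OperatorNorm

theorem sigma_continuous (T : ℝ) : Continuous (sigma T) := by
  refine intervalIntegral.continuous_primitive (fun u v => ?_) 0
  have hmeas : Measurable fun s : ℝ => (-1 : ℝ) ^ ⌊s / T⌋ :=
    (measurable_from_top (f := fun n : ℤ => (-1 : ℝ) ^ n)).comp (measurable_id.div_const T).floor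
  refine (intervalIntegrable_const (c := (1 : ℝ))).mono_fun hmeas.aestronglyMeasurable
    (Filter.Eventually.of_forall fun s => ?_)
  rcases Int.even_or_odd ⌊s / T⌋ with h | h <;> simp [h.neg_one_zpow]

theorem hasDerivAt_expm_mul_smul (c ω : ℝ) :
    HasDerivAt (fun ω : ℝ => expm ((c * ω) • Smat)) (c • (Smat * expm ((c * ω) • Smat))) ω := by
  have hcomm : expm ((c * ω) • Smat) * Smat = Smat * expm ((c * ω) • Smat) :=
    (((Commute.refl Smat).smul_left (c * ω)).exp_left).eq
  simpa [smul_smul, mul_comm, hcomm] using hasDerivAt_expm_smul (c • Smat) ω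

theorem hasDerivWithinAt_Fmat {R R' : ℝ → Mat} {s : Set ℝ} {ω : ℝ}
    (hR : HasDerivWithinAt R (R' ω) s ω) (T t : ℝ) :
    HasDerivWithinAt (Fmat R T t) (Fmatω R R' T t ω) s ω := by
  have h := hR.matrix_mul (hasDerivAt_expm_mul_smul (sigma T t) ω).hasDerivWithinAt
  rw [mul_smul_comm] at h
  exact h

theorem continuous_expm_sigma (T : ℝ) :
    Continuous fun p : ℝ × ℝ => expm ((sigma T p.1 * p.2) • Smat) :=
  (continuous_iff_continuousAt.2 fun u => (hasDerivAt_expm_smul Smat u).continuousAt).comp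
    (((sigma_continuous T).comp continuous_fst).mul continuous_snd)

theorem continuousOn_Fmat {R : ℝ → Mat} {s : Set ℝ} (hR : ContinuousOn R s) (T : ℝ) :
    ContinuousOn (Function.uncurry (Fmat R T)) (univ ×ˢ s) :=
  (hR.comp continuous_snd.continuousOn fun _ hp => hp.2).mul (continuous_expm_sigma T).continuousOn

theorem continuousOn_Fmatω {R R' : ℝ → Mat} {s : Set ℝ} (hR : ContinuousOn R s)
    (hR' : ContinuousOn R' s) (T : ℝ) :
    ContinuousOn (Function.uncurry (Fmatω R R' T)) (univ ×ˢ s) := by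
  have hexp := (continuous_expm_sigma T).continuousOn (s := univ ×ˢ s)
  exact (hR'.comp continuous_snd.continuousOn fun _ hp => hp.2).mul hexp |>.add <|
    ((sigma_continuous T).comp continuous_fst).continuousOn.smul
      ((hR.comp continuous_snd.continuousOn fun _ hp => hp.2).mul (continuousOn_const.mul hexp))

section Vectors

def crossL : E3 →L[ℝ] E3 →L[ℝ] E3 :=
  LinearMap.toContinuousBilinearMap <|
    (crossProduct.compl₁₂ (WithLp.linearEquiv 2 ℝ (Fin 3 → ℝ)).toLinearMap
      (WithLp.linearEquiv 2 ℝ (Fin 3 → ℝ)).toLinearMap).compr₂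
      (WithLp.linearEquiv 2 ℝ (Fin 3 → ℝ)).symm.toLinearMap

theorem crossL_apply (x y : E3) : crossL x y = cross x y := rfl

def actL : Mat →L[ℝ] E3 →L[ℝ] E3 :=
  (Matrix.toEuclideanLin : Mat ≃ₗ[ℝ] _).toLinearMap.toContinuousBilinearMap

theorem actL_apply (A : Mat) (x : E3) : actL A x = act A x := rfl

variable {s : Set ℝ} {x : ℝ}

theorem HasDerivWithinAt.cross {f g : ℝ → E3} {f' g' : E3} (hf : HasDerivWithinAt f f' s x)
    (hg : HasDerivWithinAt g g' s x) :
    HasDerivWithinAt (fun t => cross (f t) (g t)) (cross f' (g x) + cross (f x) g') s x := by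
  simpa only [crossL_apply, add_comm] using crossL.hasDerivWithinAt_of_bilinear hf hg

theorem HasDerivWithinAt.act {M : ℝ → Mat} {M' : Mat} (hM : HasDerivWithinAt M M' s x)
    (v : E3) : HasDerivWithinAt (fun t => act (M t) v) (act M' v) s x := by
  have h := actL.hasDerivWithinAt_of_bilinear hM (hasDerivWithinAt_const x s v)
  rwa [map_zero, zero_add] at h

variable {X : Type*} [TopologicalSpace X] {t : Set X}

theorem ContinuousOn.cross {f g : X → E3} (hf : ContinuousOn f t) (hg : ContinuousOn g t) :
    ContinuousOn (fun p => cross (f p) (g p)) t :=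
  crossL.continuous₂.comp_continuousOn (hf.prodMk hg)

theorem ContinuousOn.act {M : X → Mat} (hM : ContinuousOn M t) (v : E3) :
    ContinuousOn (fun p => act (M p) v) t :=
  (actL.flip v).continuous.comp_continuousOn hM

theorem inner_cross_self (x y : E3) : ⟪y, cross x y⟫ = 0 := by
  simp [EuclideanSpace.inner_eq_star_dotProduct, cross, dotProduct_comm _ y.ofLp]

theorem inner_add_inner_cross_eq (n n' c A₁ A₂ B₁ B₂ : E3) (u₁ u₂ : ℝ) :
    ⟪n', u₁ • (cross B₁ n + cross A₁ n') + u₂ • (cross B₂ n + cross A₂ n')⟫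
        + ⟪u₁ • cross A₁ n + u₂ • cross A₂ n, c⟫
      = u₁ * (⟪n', cross B₁ n⟫ + ⟪c, cross A₁ n⟫) + u₂ * (⟪n', cross B₂ n⟫ + ⟪c, cross A₂ n⟫) := by
  simp only [inner_add_right, real_inner_smul_right, inner_cross_self, real_inner_comm c]
  ring

end Vectors

theorem hasDerivWithinAt_Lfun {N Nt Nω Ntω : ℝ → ℝ → E3} {t₀ a b t : ℝ} (hab : a ≤ b)
    (hN : ContinuousOn (uncurry N) (Ici t₀ ×ˢ Icc a b))
    (hNω : ContinuousOn (uncurry Nω) (Ici t₀ ×ˢ Icc a b))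
    (hNt : ∀ s ∈ Ici t₀, ∀ x ∈ Icc a b, HasDerivWithinAt (N · x) (Nt s x) (Ici t₀) s)
    (hNt_cont : ContinuousOn (uncurry Nt) (Ici t₀ ×ˢ Icc a b))
    (hNωt : ∀ s ∈ Ici t₀, ∀ x ∈ Icc a b, HasDerivWithinAt (Nω · x) (Ntω s x) (Ici t₀) s)
    (hNtω_cont : ContinuousOn (uncurry Ntω) (Ici t₀ ×ˢ Icc a b)) (ht : t ∈ Ici t₀) :
    HasDerivWithinAt (fun s => Lfun a b (N s) (Nω s))
      (∫ x in a..b, (⟪Nω t x, Ntω t x⟫ + ⟪Nt t x, e3⟫)) (Ici t₀) t := by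
  have hf' : ContinuousOn (uncurry fun s x => ⟪Nω s x, Ntω s x⟫ + ⟪Nt s x, e3⟫)
      (Ici t₀ ×ˢ Icc a b) := (hNω.inner hNtω_cont).add (hNt_cont.inner continuousOn_const)
  refine hasDerivWithinAt_intervalIntegral_of_continuousOn_deriv hab (fun s hs => ?_)
    (fun s hs x hx => ?_) hf' ht
  · exact ((continuousOn_const.mul ((hNω.uncurry_left s hs).norm.pow 2)).add continuousOn_const
      |>.add ((hN.uncurry_left s hs).inner continuousOn_const)).intervalIntegrable_of_Icc hab
  · refine ((((hNωt s hs x hx).norm_sq).const_mul (1 / 2)).add_const 1).add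
      ((hNt s hs x hx).inner ℝ (hasDerivWithinAt_const s (Ici t₀) e3)) |>.congr_deriv ?_
    rw [inner_zero_right]
    ring

section ClosedLoop

def Hdensity (R R' : ℝ → Mat) (T t : ℝ) (N N' : ℝ → E3) (v : E3) (ω : ℝ) : ℝ :=
  ⟪N' ω, cross (act (Fmatω R R' T t ω) v) (N ω)⟫ + ⟪e3, cross (act (Fmat R T t ω) v) (N ω)⟫

theorem Hfun_eq_integral_Hdensity (a b : ℝ) (R R' : ℝ → Mat) (T t : ℝ) (N N' : ℝ → E3)
    (v : E3) : Hfun a b R R' T t N N' v = ∫ ω in a..b, Hdensity R R' T t N N' v ω := rfl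

def controlField (R : ℝ → Mat) (T : ℝ) (u1 u2 : ℝ → ℝ) (N : ℝ → ℝ → E3) (t ω : ℝ) : E3 :=
  u1 t • cross (act (Fmat R T t ω) e1) (N t ω) + u2 t • cross (act (Fmat R T t ω) e2) (N t ω)

variable {R R' : ℝ → Mat} {N Nω : ℝ → ℝ → E3} {u1 u2 : ℝ → ℝ} {a b T : ℝ} {S : Set ℝ}

theorem continuousOn_Hdensity (hR : ContinuousOn R (Icc a b)) (hR' : ContinuousOn R' (Icc a b))
    (hN : ContinuousOn (uncurry N) (S ×ˢ Icc a b))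
    (hNω : ContinuousOn (uncurry Nω) (S ×ˢ Icc a b)) (v : E3) :
    ContinuousOn (uncurry fun t => Hdensity R R' T t (N t) (Nω t) v) (S ×ˢ Icc a b) := by
  have hsub : S ×ˢ Icc a b ⊆ univ ×ˢ Icc a b := prod_mono (subset_univ S) subset_rfl
  exact (hNω.inner (((continuousOn_Fmatω hR hR' T).mono hsub).act v |>.cross hN)).add
    (continuousOn_const.inner (((continuousOn_Fmat hR T).mono hsub).act v |>.cross hN))

theorem continuousOn_controlField (hR : ContinuousOn R (Icc a b)) (hu1 : ContinuousOn u1 S)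
    (hu2 : ContinuousOn u2 S) (hN : ContinuousOn (uncurry N) (S ×ˢ Icc a b)) :
    ContinuousOn (uncurry (controlField R T u1 u2 N)) (S ×ˢ Icc a b) := by
  have hF := (continuousOn_Fmat hR T).mono (prod_mono (subset_univ S) (subset_refl (Icc a b)))
  exact ((hu1.comp continuousOn_fst fun _ hp => hp.1).smul ((hF.act e1).cross hN)).add
    ((hu2.comp continuousOn_fst fun _ hp => hp.1).smul ((hF.act e2).cross hN))

theorem hasDerivWithinAt_controlField {s : Set ℝ} {t ω : ℝ}
    (hR : HasDerivWithinAt R (R' ω) s ω) (hN : HasDerivWithinAt (N t) (Nω t ω) s ω) :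
    HasDerivWithinAt (controlField R T u1 u2 N t)
      (u1 t • (cross (act (Fmatω R R' T t ω) e1) (N t ω) + cross (act (Fmat R T t ω) e1) (Nω t ω))
        + u2 t • (cross (act (Fmatω R R' T t ω) e2) (N t ω)
          + cross (act (Fmat R T t ω) e2) (Nω t ω))) s ω :=
  ((((hasDerivWithinAt_Fmat hR T t).act e1).cross hN).const_smul (u1 t)).add
    ((((hasDerivWithinAt_Fmat hR T t).act e2).cross hN).const_smul (u2 t))

theorem integral_dissipation_eq_Hfun {Ntω : ℝ → E3} {t : ℝ} (hab : a < b)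
    (hR : ∀ ω ∈ Icc a b, HasDerivWithinAt R (R' ω) (Icc a b) ω)
    (hNω : ∀ ω ∈ Icc a b, HasDerivWithinAt (N t) (Nω t ω) (Icc a b) ω)
    (hNtω : ∀ ω ∈ Icc a b, HasDerivWithinAt (controlField R T u1 u2 N t) (Ntω ω) (Icc a b) ω)
    (hH : ∀ v, IntervalIntegrable (Hdensity R R' T t (N t) (Nω t) v) volume a b) :
    ∫ ω in a..b, (⟪Nω t ω, Ntω ω⟫ + ⟪controlField R T u1 u2 N t ω, e3⟫)
      = u1 t * Hfun a b R R' T t (N t) (Nω t) e1 + u2 t * Hfun a b R R' T t (N t) (Nω t) e2 := by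
  have hpt : ∀ ω ∈ uIcc a b, ⟪Nω t ω, Ntω ω⟫ + ⟪controlField R T u1 u2 N t ω, e3⟫
      = u1 t * Hdensity R R' T t (N t) (Nω t) e1 ω
        + u2 t * Hdensity R R' T t (N t) (Nω t) e2 ω := by
    intro ω hω
    rw [uIcc_of_le hab.le] at hω
    rw [(uniqueDiffOn_Icc hab ω hω).eq_deriv _ (hNtω ω hω)
      (hasDerivWithinAt_controlField (hR ω hω) (hNω ω hω))]
    exact inner_add_inner_cross_eq ..
  rw [intervalIntegral.integral_congr hpt,
    intervalIntegral.integral_add ((hH e1).const_mul _) ((hH e2).const_mul _),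
    intervalIntegral.integral_const_mul, intervalIntegral.integral_const_mul]
  rfl

end ClosedLoop

theorem stmt9_general (a b : ℝ) (hab : a < b) (T : ℝ)
    (R R' : ℝ → Matrix (Fin 3) (Fin 3) ℝ)
    (hRderiv : ∀ ω ∈ Icc a b, HasDerivWithinAt R (R' ω) (Icc a b) ω)
    (hR'cont : ContinuousOn R' (Icc a b))
    (N Nω Ntω : ℝ → ℝ → E3)
    (u1 u2 : ℝ → ℝ)
    (hu1 : ∀ t ∈ Ici (0:ℝ), u1 t = -Hfun a b R R' T t (N t) (Nω t) e1)
    (hu2 : ∀ t ∈ Ici (0:ℝ), u2 t = -Hfun a b R R' T t (N t) (Nω t) e2)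
    (hNcont : ContinuousOn (fun p : ℝ × ℝ => N p.1 p.2) (Ici 0 ×ˢ Icc a b))
    (hNω : ∀ t ∈ Ici (0:ℝ), ∀ ω ∈ Icc a b, HasDerivWithinAt (N t) (Nω t ω) (Icc a b) ω)
    (hNωcont : ContinuousOn (fun p : ℝ × ℝ => Nω p.1 p.2) (Ici 0 ×ˢ Icc a b))
    (hNtω : ∀ t ∈ Ici (0:ℝ), ∀ ω ∈ Icc a b,
      HasDerivWithinAt (fun s => Nω s ω) (Ntω t ω) (Ici 0) t)
    (hNtωcont : ContinuousOn (fun p : ℝ × ℝ => Ntω p.1 p.2) (Ici 0 ×ˢ Icc a b))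
    (hPDE : ∀ t ∈ Ici (0:ℝ), ∀ ω ∈ Icc a b,
      HasDerivWithinAt (fun s => N s ω)
        (u1 t • cross (act (Fmat R T t ω) e1) (N t ω)
          + u2 t • cross (act (Fmat R T t ω) e2) (N t ω)) (Ici 0) t) :
    (∀ t ∈ Ici (0:ℝ), DifferentiableAt ℝ (sigma T) t →
      HasDerivWithinAt (fun s => Lfun a b (N s) (Nω s))
        (-(u1 t) ^ 2 - (u2 t) ^ 2) (Ici 0) t) ∧
    AntitoneOn (fun t => Lfun a b (N t) (Nω t)) (Ici 0) := by
  have hR : ContinuousOn R (Icc a b) := fun ω hω => (hRderiv ω hω).continuousWithinAt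
  have hH := continuousOn_Hdensity (T := T) hR hR'cont hNcont hNωcont
  have hu1_cont : ContinuousOn u1 (Ici 0) := ((hH e1).intervalIntegral_prod hab.le).neg.congr hu1
  have hu2_cont : ContinuousOn u2 (Ici 0) := ((hH e2).intervalIntegral_prod hab.le).neg.congr hu2
  have hL : ∀ t ∈ Ici (0:ℝ), HasDerivWithinAt (fun s => Lfun a b (N s) (Nω s))
      (-(u1 t) ^ 2 - (u2 t) ^ 2) (Ici 0) t := by
    intro t ht
    refine (hasDerivWithinAt_Lfun (Nt := controlField R T u1 u2 N) hab.le hNcont hNωcont hPDE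
      (continuousOn_controlField hR hu1_cont hu2_cont hNcont) hNtω hNtωcont ht).congr_deriv ?_
    rw [integral_dissipation_eq_Hfun hab hRderiv (hNω t ht)
      (fun ω hω => hasDerivWithinAt_of_mixed_partials hab.le hPDE hNω hNωcont hNtω hNtωcont ht hω)
      (fun v => ((hH v).uncurry_left t ht).intervalIntegrable_of_Icc hab.le), hu1 t ht, hu2 t ht]
    ring
  refine ⟨fun t ht _ => hL t ht, antitoneOn_of_hasDerivWithinAt_nonpos
    (f' := fun t => -(u1 t) ^ 2 - (u2 t) ^ 2) (convex_Ici 0)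
    (fun t ht => (hL t ht).continuousWithinAt) (fun t ht => ?_) (fun t _ => ?_)⟩
  · rw [interior_Ici] at ht ⊢
    exact (hL t (mem_Ici_of_Ioi ht)).mono Ioi_subset_Ici_self
  · nlinarith [sq_nonneg (u1 t), sq_nonneg (u2 t)]

/-- The dissipation identity (12): with the feedback `uᵢ(t) = −Hᵢ[t, N(t,·)]`,
`d/dt L(N(t,·)) = −u₁(t)² − u₂(t)² ≤ 0` wherever σ is differentiable; in particular
`t ↦ L(N(t,·))` is nonincreasing on `[0, ∞)`. -/
theorem stmt9 (a b : ℝ) (hab : a < b) (T : ℝ) (hT : 0 < T)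
    (R R' : ℝ → Matrix (Fin 3) (Fin 3) ℝ)
    (hRderiv : ∀ ω ∈ Icc a b, HasDerivWithinAt R (R' ω) (Icc a b) ω)
    (hR'cont : ContinuousOn R' (Icc a b))
    (hRSO : ∀ ω ∈ Icc a b, IsSO (R ω))
    (N Nω Ntω : ℝ → ℝ → E3)
    (u1 u2 : ℝ → ℝ)
    (hu1 : ∀ t ∈ Ici (0:ℝ), u1 t = -Hfun a b R R' T t (N t) (Nω t) e1)
    (hu2 : ∀ t ∈ Ici (0:ℝ), u2 t = -Hfun a b R R' T t (N t) (Nω t) e2)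
    (hNcont : ContinuousOn (fun p : ℝ × ℝ => N p.1 p.2) (Ici 0 ×ˢ Icc a b))
    (hNω : ∀ t ∈ Ici (0:ℝ), ∀ ω ∈ Icc a b, HasDerivWithinAt (N t) (Nω t ω) (Icc a b) ω)
    (hNωcont : ContinuousOn (fun p : ℝ × ℝ => Nω p.1 p.2) (Ici 0 ×ˢ Icc a b))
    (hNtω : ∀ t ∈ Ici (0:ℝ), ∀ ω ∈ Icc a b,
      HasDerivWithinAt (fun s => Nω s ω) (Ntω t ω) (Ici 0) t)
    (hNtωcont : ContinuousOn (fun p : ℝ × ℝ => Ntω p.1 p.2) (Ici 0 ×ˢ Icc a b))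
    (hPDE : ∀ t ∈ Ici (0:ℝ), ∀ ω ∈ Icc a b,
      HasDerivWithinAt (fun s => N s ω)
        (u1 t • cross (act (Fmat R T t ω) e1) (N t ω)
          + u2 t • cross (act (Fmat R T t ω) e2) (N t ω)) (Ici 0) t) :
    (∀ t ∈ Ici (0:ℝ), DifferentiableAt ℝ (sigma T) t →
      HasDerivWithinAt (fun s => Lfun a b (N s) (Nω s))
        (-(u1 t) ^ 2 - (u2 t) ^ 2) (Ici 0) t) ∧
    AntitoneOn (fun t => Lfun a b (N t) (Nω t)) (Ici 0) :=
  stmt9_general a b hab T R R' hRderiv hR'cont N Nω Ntω u1 u2 hu1 hu2 hNcont hNω hNωcont hNtω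
    hNtωcont hPDE
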